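/- arXiv:0911.3464 — 4 statements merged into one kernel-verified Lean document; each statement's English description precedes it below -/
import Mathlib

section
/- Let A be a complete normed unital ℝ-algebra and φ : ℝ → A a continuous map. Then there is exactly one differentiable map g : ℝ → A with g(0) = 1 and deriv g t = g(t)·φ(t) for all t ∈ ℝ; moreover this solution satisfies that g(t) is a unit of A for every t ∈ ℝ. -/
/-!
The equation `g' = g φ` is the linear ODE `g' = L t g` for the continuous family of right
multiplications `L t = (· * φ t)`. A linear ODE with continuous coefficients on a Banach space has a
global solution, the Dyson series `∑ₙ xₙ` with `xₙ₊₁ t = ∫₀ᵗ L s (xₙ s) ds`, which converges because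
`‖xₙ t‖ ≤ ‖x₀‖ (K |t|)ⁿ / n!`; it is unique by Gronwall's inequality, since `L` is Lipschitz with a
uniform constant on bounded time intervals.

For invertibility, let `h` solve `h' = -φ h`, `h 0 = 1`. Then `(g h)' = g φ h - g φ h = 0`, so
`g h = 1`. The product `h g` solves `w' = w φ - φ w` with `w 0 = 1`, and so does the constant `1`;
by uniqueness `h g = 1`.
-/

open Set MeasureTheory NNReal Interval

section LinearODE

variable {E : Type*} [NormedAddCommGroup E] [NormedSpace ℝ E] {L : ℝ → E →L[ℝ] E}

theorem exists_nnnorm_le_of_abs_le (hL : Continuous L) (R : ℝ) :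
    ∃ K : ℝ≥0, ∀ s, |s| ≤ R → ‖L s‖₊ ≤ K := by
  obtain ⟨K, hK⟩ := (isCompact_Icc (a := -R) (b := R)).image (continuous_nnnorm.comp hL)
    |>.bddAbove
  exact ⟨K, fun s hs => hK ⟨s, abs_le.1 hs, rfl⟩⟩

theorem ODE_solution_unique_of_continuous_clm (hL : Continuous L) {f g : ℝ → E}
    (hf : ∀ t, HasDerivAt f (L t (f t)) t) (hg : ∀ t, HasDerivAt g (L t (g t)) t)
    (h0 : f 0 = g 0) : f = g := by
  funext t
  set R := |t| + 1
  obtain ⟨K, hK⟩ := exists_nnnorm_le_of_abs_le hL R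
  have hR : ∀ {y}, y ∈ Ioo (-R) R → |y| ≤ R := fun hy => (abs_lt.2 hy).le
  have h0R : (0 : ℝ) ∈ Ioo (-R) R := abs_lt.1 (by rw [abs_zero]; positivity)
  have htR : t ∈ Ioo (-R) R := abs_lt.1 (lt_add_one |t|)
  exact ODE_solution_unique_of_mem_Ioo (s := fun _ => univ)
    (fun y hy => ((L y).lipschitz.weaken (hK y (hR hy))).lipschitzOnWith)
    h0R
    (fun y _ => ⟨hf y, mem_univ _⟩) (fun y _ => ⟨hg y, mem_univ _⟩) h0 htR

theorem norm_intervalIntegral_le_of_norm_le_mul_abs_pow {f : ℝ → E} {c t : ℝ} {n : ℕ}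
    (h : ∀ s ∈ Ι 0 t, ‖f s‖ ≤ c * |s| ^ n) :
    ‖∫ s in (0 : ℝ)..t, f s‖ ≤ c * |t| ^ (n + 1) / (n + 1) := by
  rw [intervalIntegral.norm_intervalIntegral_eq]
  calc ‖∫ s in Ι 0 t, f s‖ ≤ ∫ s in Ι 0 t, c * |s| ^ n :=
        norm_integral_le_of_norm_le (by fun_prop : Continuous fun s : ℝ => c * |s| ^ n).integrableOn_uIoc
          (ae_restrict_of_forall_mem measurableSet_uIoc h)
    _ = c * |t| ^ (n + 1) / (n + 1) := by
        simpa [integral_const_mul, mul_div_assoc] using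
          congrArg (c * ·) (integral_pow_abs_sub_uIoc (a := 0) (b := t) n)

noncomputable def dysonTerm (L : ℝ → E →L[ℝ] E) (x₀ : E) : ℕ → ℝ → E
  | 0 => fun _ => x₀
  | n + 1 => fun t => ∫ s in (0 : ℝ)..t, L s (dysonTerm L x₀ n s)

noncomputable def dysonSeries (L : ℝ → E →L[ℝ] E) (x₀ : E) (t : ℝ) : E :=
  ∑' n, dysonTerm L x₀ n t

variable (x₀ : E)

theorem continuous_dysonTerm (hL : Continuous L) (n : ℕ) : Continuous (dysonTerm L x₀ n) := by
  induction n with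
  | zero => exact continuous_const
  | succ n ih =>
    exact intervalIntegral.continuous_primitive
      (fun a b => (hL.clm_apply ih).intervalIntegrable a b) 0

theorem hasDerivAt_dysonTerm_succ [CompleteSpace E] (hL : Continuous L) (n : ℕ) (t : ℝ) :
    HasDerivAt (dysonTerm L x₀ (n + 1)) (L t (dysonTerm L x₀ n t)) t :=
  ((hL.clm_apply (continuous_dysonTerm x₀ hL n)).integral_hasStrictDerivAt 0 t).hasDerivAt

theorem norm_dysonTerm_le {R : ℝ} {K : ℝ≥0} (hK : ∀ s, |s| ≤ R → ‖L s‖₊ ≤ K) (n : ℕ) {t : ℝ}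
    (ht : |t| ≤ R) : ‖dysonTerm L x₀ n t‖ ≤ ‖x₀‖ * ((K * |t|) ^ n / n.factorial) := by
  induction n generalizing t with
  | zero => simp [dysonTerm]
  | succ n ih =>
    have hbound : ∀ s ∈ Ι 0 t,
        ‖L s (dysonTerm L x₀ n s)‖ ≤ ‖x₀‖ * K ^ (n + 1) / n.factorial * |s| ^ n := by
      intro s hs
      have hst : |s| ≤ |t| := by simpa using abs_sub_left_of_mem_uIcc (uIoc_subset_uIcc hs)
      calc ‖L s (dysonTerm L x₀ n s)‖ ≤ ‖L s‖ * ‖dysonTerm L x₀ n s‖ := (L s).le_opNorm _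
        _ ≤ K * (‖x₀‖ * ((K * |s|) ^ n / n.factorial)) :=
            mul_le_mul (hK s (hst.trans ht)) (ih (hst.trans ht)) (norm_nonneg _) K.2
        _ = ‖x₀‖ * K ^ (n + 1) / n.factorial * |s| ^ n := by ring
    calc ‖dysonTerm L x₀ (n + 1) t‖
        ≤ ‖x₀‖ * K ^ (n + 1) / n.factorial * |t| ^ (n + 1) / (n + 1) :=
          norm_intervalIntegral_le_of_norm_le_mul_abs_pow hbound
      _ = ‖x₀‖ * ((K * |t|) ^ (n + 1) / (n + 1).factorial) := by
          push_cast [Nat.factorial_succ]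
          field_simp
          ring

theorem summable_dysonTerm [CompleteSpace E] (hL : Continuous L) (t : ℝ) :
    Summable fun n => dysonTerm L x₀ n t := by
  obtain ⟨K, hK⟩ := exists_nnnorm_le_of_abs_le hL |t|
  exact .of_norm_bounded ((Real.summable_pow_div_factorial (K * |t|)).mul_left ‖x₀‖)
    fun n => norm_dysonTerm_le x₀ hK n le_rfl

theorem dysonSeries_zero : dysonSeries L x₀ 0 = x₀ := by
  refine (tsum_eq_single 0 fun n hn => ?_).trans rfl
  obtain ⟨n, rfl⟩ := Nat.exists_eq_succ_of_ne_zero hn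
  simp [dysonTerm]

theorem hasDerivAt_dysonSeries [CompleteSpace E] (hL : Continuous L) (t : ℝ) :
    HasDerivAt (dysonSeries L x₀) (L t (dysonSeries L x₀ t)) t := by
  set R := |t| + 1
  obtain ⟨K, hK⟩ := exists_nnnorm_le_of_abs_le hL R
  have hR : ∀ {y}, y ∈ Ioo (-R) R → |y| ≤ R := fun hy => (abs_lt.2 hy).le
  have h0R : (0 : ℝ) ∈ Ioo (-R) R := abs_lt.1 (by rw [abs_zero]; positivity)
  have htR : t ∈ Ioo (-R) R := abs_lt.1 (lt_add_one |t|)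
  have hderiv_le : ∀ n, ∀ y ∈ Ioo (-R) R,
      ‖L y (dysonTerm L x₀ n y)‖ ≤ K * (‖x₀‖ * ((K * R) ^ n / n.factorial)) := fun n y hy =>
    calc ‖L y (dysonTerm L x₀ n y)‖ ≤ ‖L y‖ * ‖dysonTerm L x₀ n y‖ := (L y).le_opNorm _
      _ ≤ K * (‖x₀‖ * ((K * |y|) ^ n / n.factorial)) :=
          mul_le_mul (hK y (hR hy)) (norm_dysonTerm_le x₀ hK n (hR hy)) (norm_nonneg _) K.2
      _ ≤ K * (‖x₀‖ * ((K * R) ^ n / n.factorial)) := by gcongr; exact hR hy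
  have htail := hasDerivAt_tsum_of_isPreconnected
    (((Real.summable_pow_div_factorial (K * R)).mul_left ‖x₀‖).mul_left (K : ℝ))
    isOpen_Ioo isPreconnected_Ioo
    (fun n y _ => hasDerivAt_dysonTerm_succ x₀ hL n y) hderiv_le
    h0R (by simp [dysonTerm]) htR
  -- the `n = 0` term is the constant `x₀`; the others are differentiated termwise
  refine ((htail.const_add x₀).congr_of_eventuallyEq (.of_forall fun z =>
    (summable_dysonTerm x₀ hL z).tsum_eq_zero_add)).congr_deriv ?_
  exact ((L t).map_tsum (summable_dysonTerm x₀ hL t)).symm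

theorem exists_hasDerivAt_clm_apply [CompleteSpace E] (hL : Continuous L) :
    ∃ f : ℝ → E, f 0 = x₀ ∧ ∀ t, HasDerivAt f (L t (f t)) t :=
  ⟨dysonSeries L x₀, dysonSeries_zero x₀, hasDerivAt_dysonSeries x₀ hL⟩

end LinearODE

section BanachAlgebra

variable {A : Type*} [NormedRing A] [NormedAlgebra ℝ A] {φ : ℝ → A}

theorem eq_of_hasDerivAt_mul_right (hφ : Continuous φ) {f g : ℝ → A}
    (hf : ∀ t, HasDerivAt f (f t * φ t) t) (hg : ∀ t, HasDerivAt g (g t * φ t) t)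
    (h0 : f 0 = g 0) : f = g :=
  ODE_solution_unique_of_continuous_clm (L := fun t => (ContinuousLinearMap.mul ℝ A).flip (φ t))
    ((ContinuousLinearMap.mul ℝ A).flip.continuous.comp hφ) hf hg h0

variable [CompleteSpace A]

theorem exists_hasDerivAt_mul_right (hφ : Continuous φ) (a : A) :
    ∃ g : ℝ → A, g 0 = a ∧ ∀ t, HasDerivAt g (g t * φ t) t :=
  exists_hasDerivAt_clm_apply (L := fun t => (ContinuousLinearMap.mul ℝ A).flip (φ t)) a
    ((ContinuousLinearMap.mul ℝ A).flip.continuous.comp hφ)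

theorem exists_hasDerivAt_neg_mul_left (hφ : Continuous φ) (a : A) :
    ∃ h : ℝ → A, h 0 = a ∧ ∀ t, HasDerivAt h (-(φ t * h t)) t :=
  exists_hasDerivAt_clm_apply (L := fun t => -ContinuousLinearMap.mul ℝ A (φ t)) a
    ((ContinuousLinearMap.mul ℝ A).continuous.comp hφ).neg

theorem isUnit_of_hasDerivAt_mul_right (hφ : Continuous φ) {g : ℝ → A}
    (hg : ∀ t, HasDerivAt g (g t * φ t) t) (hg0 : g 0 = 1) (t : ℝ) : IsUnit (g t) := by
  obtain ⟨h, hh0, hh⟩ := exists_hasDerivAt_neg_mul_left hφ 1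
  have hgh : ∀ t, HasDerivAt (fun s => g s * h s) 0 t := fun t =>
    ((hg t).mul (hh t)).congr_deriv (by noncomm_ring)
  have hhg : ∀ t, HasDerivAt (fun s => h s * g s) (h t * g t * φ t - φ t * (h t * g t)) t :=
    fun t => ((hh t).mul (hg t)).congr_deriv (by noncomm_ring)
  have right_inv : g t * h t = 1 := by
    simpa [hg0, hh0] using is_const_of_deriv_eq_zero (fun s => (hgh s).differentiableAt)
      (fun s => (hgh s).deriv) t 0
  have left_inv : (fun s => h s * g s) = fun _ => 1 :=
    ODE_solution_unique_of_continuous_clm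
      (L := fun t => (ContinuousLinearMap.mul ℝ A).flip (φ t) - ContinuousLinearMap.mul ℝ A (φ t))
      (((ContinuousLinearMap.mul ℝ A).flip.continuous.comp hφ).sub
        ((ContinuousLinearMap.mul ℝ A).continuous.comp hφ))
      hhg (fun t => by simpa using hasDerivAt_const t (1 : A)) (by simp [hh0, hg0])
  exact isUnit_iff_exists.2 ⟨h t, right_inv, congrFun left_inv t⟩

end BanachAlgebra

/-- Well-definedness of the Higgs-field holonomy: for a continuous `φ : ℝ → A`
with values in a Banach algebra `A`, the equation `∂g = g·φ`, `g(0) = 1` has a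
unique differentiable solution, and the solution is unit-valued. -/
theorem higgs_holonomy_exists_unique
    {A : Type*} [NormedRing A] [NormedAlgebra ℝ A] [CompleteSpace A]
    (φ : ℝ → A) (hφ : Continuous φ) :
    (∃! g : ℝ → A, Differentiable ℝ g ∧ g 0 = 1 ∧ ∀ t, deriv g t = g t * φ t) ∧
      ∀ g : ℝ → A, Differentiable ℝ g → g 0 = 1 → (∀ t, deriv g t = g t * φ t) →
        ∀ t, IsUnit (g t) := by
  have hasDerivAt_of_deriv_eq {g : ℝ → A} (hg : Differentiable ℝ g)
      (hg' : ∀ t, deriv g t = g t * φ t) (t : ℝ) : HasDerivAt g (g t * φ t) t :=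
    hg' t ▸ (hg t).hasDerivAt
  obtain ⟨g, hg0, hg⟩ := exists_hasDerivAt_mul_right hφ 1
  refine ⟨⟨g, ⟨fun t => (hg t).differentiableAt, hg0, fun t => (hg t).deriv⟩, ?_⟩, ?_⟩
  · rintro f ⟨hf, hf0, hf'⟩
    exact eq_of_hasDerivAt_mul_right hφ (hasDerivAt_of_deriv_eq hf hf') hg (hf0.trans hg0.symm)
  · intro f hf hf0 hf'
    exact isUnit_of_hasDerivAt_mul_right hφ (hasDerivAt_of_deriv_eq hf hf') hf0
end

section
/- Let A be a complete normed unital ℝ-algebra and p : ℝ → A a continuously differentiable map with p(0) = 1 and with p(t) a unit of A for every t ∈ ℝ. Then the map t ↦ p(t)⁻¹ · deriv p t is periodic with period 2π if and only if p(t + 2πn) = p(2π)^n · p(t) for every t ∈ ℝ and every n ∈ ℤ. -/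
/-!
If `a = p⁻¹ p'` is `2π`-periodic, then `t ↦ p (t + 2π)` and `p` solve the same equation
`y' = y a`, so `p (t + 2π) · p(t)⁻¹` has zero derivative and equals its value `p(2π)` at `0`;
iterating `p (t + 2π) = p(2π) · p t` forwards and backwards gives all `n ∈ ℤ`. Conversely,
differentiating `p (t + 2π) = p(2π) · p t` gives `p' (t + 2π) = p(2π) · p' t`, and the factor
`p(2π)` cancels in `p⁻¹ p'`.
-/

open Ring

section Quasiperiodic

variable {G M : Type*} [AddGroup G] [Monoid M]

theorem add_zsmul_eq_units_zpow_mul {f : G → M} {g : G} {u : Mˣ}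
    (h : ∀ x, f (x + g) = u * f x) (x : G) (n : ℤ) :
    f (x + n • g) = ↑(u ^ n) * f x := by
  induction n using Int.induction_on with
  | zero => simp
  | succ n ih =>
    rw [add_zsmul, one_zsmul, ← add_assoc, h, ih, ← mul_assoc, ← Units.val_mul]
    congr 2
    group
  | pred n ih =>
    have hstep := h (x + (-n - 1 : ℤ) • g)
    rw [add_assoc, ← add_one_zsmul, sub_add_cancel, ih] at hstep
    rw [← u.inv_mul_cancel_left (f _), ← hstep, ← mul_assoc, ← Units.val_mul]
    congr 2
    group

end Quasiperiodic

section UnitPath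

variable {A : Type*} [NormedRing A] [NormedAlgebra ℝ A]

theorem HasDerivAt.ringInverse [CompleteSpace A] {p : ℝ → A} {p' : A} {t : ℝ}
    (hp : HasDerivAt p p' t) (hu : IsUnit (p t)) :
    HasDerivAt (fun s => inverse (p s)) (-(inverse (p t) * p' * inverse (p t))) t := by
  obtain ⟨u, hu⟩ := hu
  have hinv := hasFDerivAt_ringInverse (𝕜 := ℝ) u
  rw [hu] at hinv
  rw [← hu, inverse_unit]
  exact hinv.comp_hasDerivAt t hp

theorem mul_inverse_eq_of_inverse_mul_deriv_eq [CompleteSpace A] {q r : ℝ → A}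
    (hq : Differentiable ℝ q) (hr : Differentiable ℝ r)
    (hqu : ∀ t, IsUnit (q t)) (hru : ∀ t, IsUnit (r t))
    (h : ∀ t, inverse (q t) * deriv q t = inverse (r t) * deriv r t) (t s : ℝ) :
    q t * inverse (r t) = q s * inverse (r s) := by
  have hderiv : ∀ t, HasDerivAt (fun s => q s * inverse (r s)) 0 t := by
    intro t
    have hq' : deriv q t = q t * (inverse (r t) * deriv r t) := by
      rw [← h, mul_inverse_cancel_left _ _ (hqu t)]
    refine ((hq t).hasDerivAt.mul ((hr t).hasDerivAt.ringInverse (hru t))).congr_deriv ?_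
    rw [hq']
    noncomm_ring
  exact is_const_of_deriv_eq_zero (fun t => (hderiv t).differentiableAt)
    (fun t => (hderiv t).deriv) t s

theorem add_period_eq_mul_of_periodic_inverse_mul_deriv [CompleteSpace A] {p : ℝ → A} {T : ℝ}
    (hp : Differentiable ℝ p) (hu : ∀ t, IsUnit (p t))
    (hper : Function.Periodic (fun t => inverse (p t) * deriv p t) T) (t : ℝ) :
    p (t + T) = p T * inverse (p 0) * p t := by
  have hshift : Differentiable ℝ (fun s => p (s + T)) := hp.comp (differentiable_id.add_const T)
  have hconst := mul_inverse_eq_of_inverse_mul_deriv_eq hshift hp (fun s => hu (s + T)) hu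
    (fun s => by simpa only [deriv_comp_add_const] using hper s) t 0
  rw [zero_add] at hconst
  rw [← hconst, inverse_mul_cancel_right _ _ (hu t)]

theorem periodic_inverse_mul_deriv_of_add_eq_mul {p : ℝ → A} {T : ℝ} {c : A}
    (hp : Differentiable ℝ p) (hc : IsUnit c) (h : ∀ t, p (t + T) = c * p t) :
    Function.Periodic (fun t => inverse (p t) * deriv p t) T := by
  intro t
  have hderiv : deriv p (t + T) = c * deriv p t := by
    rw [← deriv_comp_add_const, funext h, deriv_const_mul _ (hp t)]
  show inverse (p (t + T)) * deriv p (t + T) = inverse (p t) * deriv p t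
  rw [h, hderiv, inverse_mul (.inl hc), mul_assoc, inverse_mul_cancel_left _ _ hc]

end UnitPath

/-- A C¹ unit-valued path `p : ℝ → A` with `p 0 = 1` has `p⁻¹ ∂p` periodic of
period `2π` if and only if `p (t + 2πn) = p(2π)ⁿ · p t` for all `t ∈ ℝ`, `n ∈ ℤ`
(quasi-periodicity characterizing the path fibration `PG`). -/
theorem inverse_deriv_periodic_iff_quasiperiodic
    {A : Type*} [NormedRing A] [NormedAlgebra ℝ A] [CompleteSpace A]
    (p : ℝ → A) (hp : ContDiff ℝ 1 p) (hp0 : p 0 = 1) (hu : ∀ t, IsUnit (p t)) :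
    Function.Periodic (fun t => Ring.inverse (p t) * deriv p t) (2 * Real.pi) ↔
      ∀ (t : ℝ) (n : ℤ),
        p (t + 2 * Real.pi * n) = (((hu (2 * Real.pi)).unit ^ n : Aˣ) : A) * p t := by
  have hdiff : Differentiable ℝ p := hp.differentiable one_ne_zero
  have hunit : ((hu (2 * Real.pi)).unit : A) = p (2 * Real.pi) := (hu _).unit_spec
  constructor
  · intro hper t n
    rw [mul_comm, ← zsmul_eq_mul]
    refine add_zsmul_eq_units_zpow_mul (fun s => ?_) t n
    rw [hunit, add_period_eq_mul_of_periodic_inverse_mul_deriv hdiff hu hper, hp0, inverse_one,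
      mul_one]
  · intro h
    refine periodic_inverse_mul_deriv_of_add_eq_mul hdiff (hu (2 * Real.pi)) (fun t => ?_)
    simpa [hunit] using h t 1
end

section
/- Let A be a complete normed unital ℝ-algebra, φ : ℝ → A a continuous map, and h : ℝ → A a differentiable map with h(0) = 1 and h(t) a unit of A for every t ∈ ℝ. If g : ℝ → A is differentiable with g(0) = 1 and deriv g t = g(t)·φ(t) for all t ∈ ℝ, then the pointwise product k(t) := g(t)·h(t) satisfies k(0) = 1 and deriv k t = k(t)·( h(t)⁻¹·φ(t)·h(t) + h(t)⁻¹·deriv h t ) for all t ∈ ℝ. -/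
/-! The Leibniz rule gives `∂(g h) = g φ h + g ∂h`; inserting `1 = h h⁻¹` after `g` in both terms
turns this into `(g h) (h⁻¹ φ h + h⁻¹ ∂h)`. -/

theorem IsUnit.mul_mul_inverse_mul {M₀ : Type*} [MonoidWithZero M₀] {u : M₀} (hu : IsUnit u)
    (a x : M₀) : a * u * (Ring.inverse u * x) = a * x := by
  rw [mul_assoc, ← mul_assoc u, Ring.mul_inverse_cancel u hu, one_mul]

theorem HasDerivAt.mul_gauge_transform {𝕜 𝔸 : Type*} [NontriviallyNormedField 𝕜] [NormedRing 𝔸]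
    [NormedAlgebra 𝕜 𝔸] {g h : 𝕜 → 𝔸} {φ h' : 𝔸} {t : 𝕜} (hg : HasDerivAt g (g t * φ) t)
    (hh : HasDerivAt h h' t) (hu : IsUnit (h t)) :
    HasDerivAt (fun s => g s * h s)
      (g t * h t * (Ring.inverse (h t) * φ * h t + Ring.inverse (h t) * h')) t := by
  convert hg.fun_mul hh using 1
  rw [mul_add, mul_assoc (Ring.inverse _), hu.mul_mul_inverse_mul, hu.mul_mul_inverse_mul,
    ← mul_assoc]

theorem higgs_holonomy_gauge_transform_general
    {A : Type*} [NormedRing A] [NormedAlgebra ℝ A]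
    (φ : ℝ → A)
    (h : ℝ → A) (hh : Differentiable ℝ h) (h0 : h 0 = 1) (hu : ∀ t, IsUnit (h t))
    (g : ℝ → A) (hg : Differentiable ℝ g) (g0 : g 0 = 1)
    (hode : ∀ t, deriv g t = g t * φ t) :
    g 0 * h 0 = 1 ∧
      ∀ t, deriv (fun s => g s * h s) t =
        (g t * h t) *
          (Ring.inverse (h t) * φ t * h t + Ring.inverse (h t) * deriv h t) := by
  refine ⟨by rw [g0, h0, one_mul], fun t => ?_⟩
  have hg_ode : HasDerivAt g (g t * φ t) t := hode t ▸ (hg t).hasDerivAt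
  exact (hg_ode.mul_gauge_transform (hh t).hasDerivAt (hu t)).deriv

/-- Gauge transformation of the Higgs-field holonomy equation: if `∂g = g·φ`
with `g 0 = 1`, and `h` is a differentiable unit-valued map with `h 0 = 1`,
then `k = g·h` satisfies `k 0 = 1` and `∂k = k·(Ad(h⁻¹)φ + h⁻¹ ∂h)`. -/
theorem higgs_holonomy_gauge_transform
    {A : Type*} [NormedRing A] [NormedAlgebra ℝ A] [CompleteSpace A]
    (φ : ℝ → A) (hφ : Continuous φ)
    (h : ℝ → A) (hh : Differentiable ℝ h) (h0 : h 0 = 1) (hu : ∀ t, IsUnit (h t))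
    (g : ℝ → A) (hg : Differentiable ℝ g) (g0 : g 0 = 1)
    (hode : ∀ t, deriv g t = g t * φ t) :
    g 0 * h 0 = 1 ∧
      ∀ t, deriv (fun s => g s * h s) t =
        (g t * h t) *
          (Ring.inverse (h t) * φ t * h t + Ring.inverse (h t) * deriv h t) :=
  higgs_holonomy_gauge_transform_general φ h hh h0 hu g hg g0 hode
end

section
/- Let G be a connected Lie group, PG := { p : ℝ → G smooth | p(0) = 1 and p(t + 2π) = p(2π)·p(t) for all t ∈ ℝ }, ΩG := { γ : ℝ → G smooth | γ(0) = 1 and γ(t + 2π) = γ(t) for all t ∈ ℝ }, and let ℤ act on G × G × ℝ by n·(g, h, t) = (g, gⁿ·h, t + 2πn). Then: (i) the formula (p, g, t)·(γ, n) = (p·γ, γ(t)⁻¹·g, t + 2πn) defines a right action of the product group ΩG × ℤ on PG × G × ℝ; (ii) the map Ψ : PG × G × ℝ → (G × G × ℝ)/ℤ, Ψ(p, g, t) = [p(2π), p(t)·g, t], is invariant under this action; (iii) the induced map on the quotient (PG × G × ℝ)/(ΩG × ℤ) → (G × G × ℝ)/ℤ is a bijection, and it is equivariant for the right G-actions [p,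 g, t]·k = [p, g·k, t] and [g, h, t]·k = [g, h·k, t]. -/
/-!
`Ψ` is invariant because a loop `γ` has `γ(2π) = 1`, while `p ∈ PG` satisfies
`p(t + 2πn) = p(2π)ⁿ p(t)`. Two triples with `ℤ`-related images differ by the action of the
loop `p⁻¹q`, which gives injectivity. Surjectivity needs, for each `g ∈ G`, some `p ∈ PG`
with `p(2π) = g`. In a connected Lie group the elements joined to `1` by smooth paths that are
constant near their ends form an open, hence closed, subgroup, so such a path `f` from `1` to
`g` exists; its quasi-periodic extension `t ↦ g^⌊t/2π⌋ f(t - 2π⌊t/2π⌋)` is smooth because `f`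
is constant near the ends.
-/

open scoped Manifold

/-- Membership in the path fibration `PG`: smooth `p : ℝ → G` with `p 0 = 1`
and `p (t + 2π) = p (2π) * p t` for all `t`. -/
def MemPathFib {E : Type*} [NormedAddCommGroup E] [NormedSpace ℝ E]
    {H : Type*} [TopologicalSpace H] (I : ModelWithCorners ℝ E H)
    {G : Type*} [TopologicalSpace G] [ChartedSpace H G] [Group G]
    (p : ℝ → G) : Prop :=
  ContMDiff 𝓘(ℝ, ℝ) I (⊤ : ℕ∞) p ∧ p 0 = 1 ∧
    ∀ t : ℝ, p (t + 2 * Real.pi) = p (2 * Real.pi) * p t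

/-- Membership in the based loop group `ΩG`: smooth `γ : ℝ → G` with `γ 0 = 1`
and `γ (t + 2π) = γ t` for all `t`. -/
def MemLoopGrp {E : Type*} [NormedAddCommGroup E] [NormedSpace ℝ E]
    {H : Type*} [TopologicalSpace H] (I : ModelWithCorners ℝ E H)
    {G : Type*} [TopologicalSpace G] [ChartedSpace H G] [Group G]
    (γ : ℝ → G) : Prop :=
  ContMDiff 𝓘(ℝ, ℝ) I (⊤ : ℕ∞) γ ∧ γ 0 = 1 ∧ ∀ t : ℝ, γ (t + 2 * Real.pi) = γ t

/-- The right action of `(γ, n) ∈ ΩG × ℤ` on a triple `(p, g, t)`: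
`(p, g, t)·(γ, n) = (p·γ, γ(t)⁻¹·g, t + 2πn)`. -/
noncomputable def caloronAct {G : Type*} [Group G]
    (x : (ℝ → G) × G × ℝ) (γ : ℝ → G) (n : ℤ) : (ℝ → G) × G × ℝ :=
  (fun t => x.1 t * γ t, (γ x.2.2)⁻¹ * x.2.1, x.2.2 + 2 * Real.pi * n)

/-- The relation on `G × G × ℝ` generated by the `ℤ`-action
`n·(g, h, t) = (g, gⁿh, t + 2πn)`, whose quotient is `~PG`. -/
def zRel {G : Type*} [Group G] (a b : G × G × ℝ) : Prop :=
  ∃ n : ℤ, ((a.1, a.1 ^ n * a.2.1, a.2.2 + 2 * Real.pi * n) : G × G × ℝ) = b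

/-- The map `Ψ(p, g, t) = (p(2π), p(t)·g, t)` inducing `𝒞(PG) ≅ ~PG`. -/
noncomputable def caloronPsi {G : Type*} [Group G]
    (x : (ℝ → G) × G × ℝ) : G × G × ℝ :=
  (x.1 (2 * Real.pi), x.1 x.2.2 * x.2.1, x.2.2)

/-- The relation on `PG × G × ℝ` generated by the right `ΩG × ℤ`-action, whose
quotient is the total space of the caloron transform `𝒞(PG)`. -/
def caloronDomRel {E : Type*} [NormedAddCommGroup E] [NormedSpace ℝ E]
    {H : Type*} [TopologicalSpace H] (I : ModelWithCorners ℝ E H)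
    (G : Type*) [TopologicalSpace G] [ChartedSpace H G] [Group G]
    (x y : {x : (ℝ → G) × G × ℝ // MemPathFib I x.1}) : Prop :=
  ∃ γ : ℝ → G, MemLoopGrp I γ ∧ ∃ n : ℤ, caloronAct x.val γ n = y.val

section QuasiPeriodic

variable {G : Type*} [Group G]

theorem apply_add_mul_int_of_forall_apply_add {f : ℝ → G} {c : ℝ} {a : G}
    (h : ∀ t, f (t + c) = a * f t) (t : ℝ) (n : ℤ) : f (t + c * n) = a ^ n * f t := by
  induction n using Int.induction_on with
  | zero => simp
  | succ k ih =>
    rw [Int.cast_add, Int.cast_one, mul_add_one, ← add_assoc, h, ih, ← mul_assoc,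
      ← zpow_one_add, add_comm]
  | pred k ih =>
    have hk := h (t + c * ↑(-(k : ℤ) - 1))
    rw [show t + c * ↑(-(k : ℤ) - 1) + c = t + c * ↑(-(k : ℤ)) by push_cast; ring, ih] at hk
    rw [eq_inv_mul_of_mul_eq hk.symm, ← mul_assoc, ← zpow_neg_one, ← zpow_add, neg_add_eq_sub]

/-- The extension of `F : ℝ → G` satisfying `p (t + c) = g * p t` that agrees with `F` on
`[0, c)`. -/
noncomputable def quasiPeriodicExt {c : ℝ} (hc : 0 < c) (g : G) (F : ℝ → G) (t : ℝ) : G :=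
  g ^ toIcoDiv hc 0 t * F (toIcoMod hc 0 t)

variable {c : ℝ} (hc : 0 < c) (g : G) {F : ℝ → G}

theorem quasiPeriodicExt_zero : quasiPeriodicExt hc g F 0 = F 0 := by
  simp [quasiPeriodicExt, toIcoDiv_apply_left, toIcoMod_apply_left]

theorem quasiPeriodicExt_add_period (t : ℝ) :
    quasiPeriodicExt hc g F (t + c) = g * quasiPeriodicExt hc g F t := by
  rw [quasiPeriodicExt, quasiPeriodicExt, toIcoDiv_add_right, toIcoMod_add_right, add_comm,
    zpow_one_add, mul_assoc]

theorem quasiPeriodicExt_eqOn (hF0 : ∀ t ≤ 0, F t = 1)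
    (hF1 : ∀ t ≥ 1, F t = g) (n : ℤ) :
    Set.EqOn (quasiPeriodicExt hc g F) (fun t => g ^ n * F (t - n • c))
      (Set.Ioo (n • c - (c - 1)) (n • c + c)) := by
  rintro t ⟨hlo, hhi⟩
  simp only [quasiPeriodicExt, ← self_sub_toIcoDiv_zsmul]
  rcases le_or_gt (n • c) t with hle | hlt
  · rw [(toIcoDiv_eq_iff hc).2 ⟨by linarith, by linarith⟩]
  · have hdiv : toIcoDiv hc 0 t = n - 1 :=
      (toIcoDiv_eq_iff hc).2 ⟨by rw [sub_zsmul, one_zsmul]; linarith,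
        by rw [sub_zsmul, one_zsmul]; linarith⟩
    rw [hdiv, hF1 _ (by rw [sub_zsmul, one_zsmul]; linarith), hF0 _ (by linarith),
      ← zpow_add_one, sub_add_cancel, mul_one]

variable {E : Type*} [NormedAddCommGroup E] [NormedSpace ℝ E]
    {H : Type*} [TopologicalSpace H] {I : ModelWithCorners ℝ E H}
    [TopologicalSpace G] [ChartedSpace H G] [ContMDiffMul I (⊤ : ℕ∞) G]

theorem contMDiff_quasiPeriodicExt (hc1 : 1 < c) (hF : ContMDiff 𝓘(ℝ, ℝ) I (⊤ : ℕ∞) F)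
    (hF0 : ∀ t ≤ 0, F t = 1) (hF1 : ∀ t ≥ 1, F t = g) :
    ContMDiff 𝓘(ℝ, ℝ) I (⊤ : ℕ∞) (quasiPeriodicExt hc g F) := by
  intro t₀
  set n := toIcoDiv hc 0 t₀
  obtain ⟨hlo, hhi⟩ := sub_toIcoDiv_zsmul_mem_Ico hc 0 t₀
  have hshift : ContMDiff 𝓘(ℝ, ℝ) I (⊤ : ℕ∞) (fun t => g ^ n * F (t - n • c)) :=
    contMDiff_const.mul (hF.comp (contDiff_id.sub contDiff_const).contMDiff)
  exact (hshift t₀).congr_of_eventuallyEq <|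
    (quasiPeriodicExt_eqOn hc g hF0 hF1 n).eventuallyEq_of_mem
      (Ioo_mem_nhds (by linarith) (by linarith))

end QuasiPeriodic

section JoinedSmoothly

open Topology

variable {E : Type*} [NormedAddCommGroup E] [NormedSpace ℝ E]
    {H : Type*} [TopologicalSpace H] (I : ModelWithCorners ℝ E H)

/-- Constancy near the ends is what makes quasi-periodic extensions of such paths smooth. -/
def JoinedSmoothly {M : Type*} [TopologicalSpace M] [ChartedSpace H M] (a b : M) : Prop :=
  ∃ f : ℝ → M, ContMDiff 𝓘(ℝ, ℝ) I (⊤ : ℕ∞) f ∧ (∀ t ≤ 0, f t = a) ∧ ∀ t ≥ 1, f t = b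

variable {I}

theorem JoinedSmoothly.refl {M : Type*} [TopologicalSpace M] [ChartedSpace H M] (a : M) :
    JoinedSmoothly I a a :=
  ⟨fun _ => a, contMDiff_const, fun _ _ => rfl, fun _ _ => rfl⟩

theorem exists_eventually_joinedSmoothly {M : Type*} [TopologicalSpace M] [ChartedSpace H M]
    [IsManifold I (⊤ : ℕ∞) M] [Nonempty M] : ∃ x : M, ∀ᶠ y in 𝓝 x, JoinedSmoothly I x y := by
  obtain ⟨x₀⟩ := ‹Nonempty M›
  -- The chart image of `x₀` may lie on the boundary of the model, so centre a ball at an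
  -- interior point `z` instead.
  obtain ⟨z, hz⟩ := interior_extChartAt_target_nonempty I x₀
  set e := extChartAt I x₀
  obtain ⟨r, hr, hball⟩ := Metric.isOpen_iff.mp isOpen_interior z hz
  have hball_target : Metric.ball z r ⊆ e.target := hball.trans interior_subset
  have hsource : e.symm z ∈ e.source := e.map_target (hball_target (Metric.mem_ball_self hr))
  have hz_eq : e (e.symm z) = z := e.right_inv (hball_target (Metric.mem_ball_self hr))
  refine ⟨e.symm z, ?_⟩
  have hnear : ∀ᶠ y in 𝓝 (e.symm z), e y ∈ Metric.ball z r :=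
    (continuousAt_extChartAt' hsource).eventually
      (by rw [hz_eq]; exact Metric.isOpen_ball.mem_nhds (Metric.mem_ball_self hr))
  filter_upwards [hnear, extChartAt_source_mem_nhds' hsource] with y hy hy_source
  have hseg : ∀ t, z + Real.smoothTransition t • (e y - z) ∈ e.target := by
    intro t
    refine hball_target (Metric.mem_ball.2 ?_)
    rw [dist_eq_norm, add_sub_cancel_left, norm_smul, Real.norm_of_nonneg
      (Real.smoothTransition.nonneg t)]
    exact (mul_le_of_le_one_left (norm_nonneg _) (Real.smoothTransition.le_one t)).trans_lt
      (by rwa [← dist_eq_norm, ← Metric.mem_ball])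
  refine ⟨fun t => e.symm (z + Real.smoothTransition t • (e y - z)),
    (contMDiffOn_extChartAt_symm x₀).comp_contMDiff
      (contDiff_const.add (Real.smoothTransition.contDiff.smul contDiff_const)).contMDiff hseg,
    fun t ht => ?_, fun t ht => ?_⟩
  · simp only [Real.smoothTransition.zero_of_nonpos ht, zero_smul, add_zero]
  · simp only [Real.smoothTransition.one_of_one_le ht, one_smul, add_sub_cancel,
      e.left_inv hy_source]

variable {G : Type*} [TopologicalSpace G] [ChartedSpace H G] [Group G]

theorem JoinedSmoothly.mul [ContMDiffMul I (⊤ : ℕ∞) G] {a b c d : G} (h : JoinedSmoothly I a b)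
    (h' : JoinedSmoothly I c d) : JoinedSmoothly I (a * c) (b * d) := by
  obtain ⟨f, hf, hf0, hf1⟩ := h
  obtain ⟨f', hf', hf0', hf1'⟩ := h'
  exact ⟨f * f', hf.mul hf', fun t ht => by simp [hf0 t ht, hf0' t ht],
    fun t ht => by simp [hf1 t ht, hf1' t ht]⟩

variable [LieGroup I (⊤ : ℕ∞) G]

theorem JoinedSmoothly.inv {a b : G} (h : JoinedSmoothly I a b) : JoinedSmoothly I a⁻¹ b⁻¹ := by
  obtain ⟨f, hf, hf0, hf1⟩ := h
  exact ⟨f⁻¹, hf.inv, fun t ht => by simp [hf0 t ht], fun t ht => by simp [hf1 t ht]⟩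

def smoothPathSubgroup : Subgroup G where
  carrier := {g | JoinedSmoothly I 1 g}
  mul_mem' ha hb := by simpa using ha.mul hb
  one_mem' := JoinedSmoothly.refl 1
  inv_mem' ha := by simpa using ha.inv

theorem smoothPathSubgroup_mem_nhds_one :
    (smoothPathSubgroup (I := I) (G := G) : Set G) ∈ 𝓝 1 := by
  have := continuousMul_of_contMDiffMul I (⊤ : ℕ∞) (G := G)
  obtain ⟨x, hx⟩ := exists_eventually_joinedSmoothly (I := I) (M := G)
  have htendsto : Filter.Tendsto (x * ·) (𝓝 1) (𝓝 x) :=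
    (continuous_const_mul x).tendsto' 1 x (mul_one x)
  filter_upwards [htendsto.eventually hx] with u hu
  show JoinedSmoothly I 1 u
  simpa using (JoinedSmoothly.refl x⁻¹).mul hu

theorem joinedSmoothly_one [ConnectedSpace G] (g : G) : JoinedSmoothly I 1 g := by
  have := continuousMul_of_contMDiffMul I (⊤ : ℕ∞) (G := G)
  have hopen := (smoothPathSubgroup (I := I) (G := G)).isOpen_of_mem_nhds
    smoothPathSubgroup_mem_nhds_one
  have huniv := IsClopen.eq_univ ⟨Subgroup.isClosed_of_isOpen _ hopen, hopen⟩
    ⟨1, (smoothPathSubgroup (I := I) (G := G)).one_mem⟩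
  exact Set.eq_univ_iff_forall.mp huniv g

end JoinedSmoothly

section Caloron

theorem zRel_equivalence {G : Type*} [Group G] : Equivalence (zRel (G := G)) where
  refl a := ⟨0, by simp⟩
  symm := by
    rintro a b ⟨n, rfl⟩
    exact ⟨-n, by simp [← mul_assoc]⟩
  trans := by
    rintro a b c ⟨m, rfl⟩ ⟨n, rfl⟩
    exact ⟨m + n, by simp [← mul_assoc, ← zpow_add, add_assoc, mul_add, add_comm]⟩

variable {E : Type*} [NormedAddCommGroup E] [NormedSpace ℝ E]
    {H : Type*} [TopologicalSpace H] {I : ModelWithCorners ℝ E H}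
    {G : Type*} [TopologicalSpace G] [ChartedSpace H G] [Group G]

theorem MemLoopGrp.apply_two_pi {γ : ℝ → G} (hγ : MemLoopGrp I γ) : γ (2 * Real.pi) = 1 := by
  rw [← zero_add (2 * Real.pi), hγ.2.2, hγ.2.1]

theorem MemLoopGrp.apply_add_two_pi_mul_int {γ : ℝ → G} (hγ : MemLoopGrp I γ) (t : ℝ) (n : ℤ) :
    γ (t + 2 * Real.pi * n) = γ t := by
  rw [mul_comm]
  exact Function.Periodic.int_mul hγ.2.2 n t

theorem MemPathFib.mul [ContMDiffMul I (⊤ : ℕ∞) G] {p γ : ℝ → G} (hp : MemPathFib I p)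
    (hγ : MemLoopGrp I γ) : MemPathFib I (p * γ) := by
  refine ⟨hp.1.mul hγ.1, by simp [hp.2.1, hγ.2.1], fun t => ?_⟩
  simp only [Pi.mul_apply, hp.2.2 t, hγ.2.2 t, hγ.apply_two_pi, mul_one, mul_assoc]

theorem MemPathFib.inv_mul [LieGroup I (⊤ : ℕ∞) G] {p q : ℝ → G} (hp : MemPathFib I p)
    (hq : MemPathFib I q) (h : p (2 * Real.pi) = q (2 * Real.pi)) : MemLoopGrp I (p⁻¹ * q) := by
  refine ⟨hp.1.inv.mul hq.1, by simp [hp.2.1, hq.2.1], fun t => ?_⟩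
  simp only [Pi.mul_apply, Pi.inv_apply, hp.2.2 t, hq.2.2 t, h, mul_inv_rev, mul_assoc,
    inv_mul_cancel_left]

theorem exists_memPathFib_apply_two_pi [LieGroup I (⊤ : ℕ∞) G] [ConnectedSpace G] (g : G) :
    ∃ p : ℝ → G, MemPathFib I p ∧ p (2 * Real.pi) = g := by
  obtain ⟨f, hf, hf0, hf1⟩ := joinedSmoothly_one (I := I) g
  have hperiod : 1 < 2 * Real.pi := by linarith [Real.pi_gt_three]
  have hp0 : quasiPeriodicExt Real.two_pi_pos g f 0 = 1 := by
    rw [quasiPeriodicExt_zero, hf0 0 le_rfl]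
  have hp2pi : quasiPeriodicExt Real.two_pi_pos g f (2 * Real.pi) = g := by
    simpa [hp0] using quasiPeriodicExt_add_period Real.two_pi_pos g (F := f) 0
  refine ⟨quasiPeriodicExt Real.two_pi_pos g f,
    ⟨contMDiff_quasiPeriodicExt _ g hperiod hf hf0 hf1, hp0, fun t => ?_⟩, hp2pi⟩
  rw [quasiPeriodicExt_add_period, hp2pi]

theorem caloronAct_caloronAct (x : (ℝ → G) × G × ℝ) (γ₁ : ℝ → G) {γ₂ : ℝ → G}
    (hγ₂ : MemLoopGrp I γ₂) (n₁ n₂ : ℤ) :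
    caloronAct (caloronAct x γ₁ n₁) γ₂ n₂ = caloronAct x (fun t => γ₁ t * γ₂ t) (n₁ + n₂) := by
  simp only [caloronAct, hγ₂.apply_add_two_pi_mul_int, Prod.mk.injEq]
  exact ⟨funext fun t => mul_assoc _ _ _, by rw [mul_inv_rev, mul_assoc], by push_cast; ring⟩

theorem zRel_caloronPsi_caloronAct {x : (ℝ → G) × G × ℝ} (hx : MemPathFib I x.1) {γ : ℝ → G}
    (hγ : MemLoopGrp I γ) (n : ℤ) : zRel (caloronPsi x) (caloronPsi (caloronAct x γ n)) := by
  refine ⟨n, ?_⟩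
  simp only [caloronPsi, caloronAct, hγ.apply_two_pi, hγ.apply_add_two_pi_mul_int,
    apply_add_mul_int_of_forall_apply_add hx.2.2, mul_one]
  simp only [mul_assoc, mul_inv_cancel_left]

variable (I G) in
noncomputable def caloronPsiQuot : Quot (caloronDomRel I G) → Quot (zRel (G := G)) :=
  Quot.lift (fun x => Quot.mk _ (caloronPsi x.val)) fun a _ ⟨γ, hγ, n, hab⟩ => by
    rw [← hab]
    exact Quot.sound (zRel_caloronPsi_caloronAct a.prop hγ n)

variable [LieGroup I (⊤ : ℕ∞) G]

theorem caloronDomRel_of_zRel {a b : {x : (ℝ → G) × G × ℝ // MemPathFib I x.1}}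
    (hab : zRel (caloronPsi a.val) (caloronPsi b.val)) : caloronDomRel I G a b := by
  obtain ⟨⟨p, g, t⟩, hp : MemPathFib I p⟩ := a
  obtain ⟨⟨q, h, _⟩, hq : MemPathFib I q⟩ := b
  obtain ⟨n, hn⟩ := hab
  simp only [caloronPsi, Prod.mk.injEq] at hn
  obtain ⟨h2pi, hfib, rfl⟩ := hn
  rw [apply_add_mul_int_of_forall_apply_add hq.2.2, ← h2pi, mul_assoc] at hfib
  have hcancel : p t * g = q t * h := mul_left_cancel hfib
  refine ⟨p⁻¹ * q, hp.inv_mul hq h2pi, n, ?_⟩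
  simp only [caloronAct, Pi.mul_apply, Pi.inv_apply, mul_inv_rev, inv_inv, mul_assoc, hcancel,
    mul_inv_cancel_left, inv_mul_cancel_left]

theorem caloronPsiQuot_injective : Function.Injective (caloronPsiQuot I G) := by
  rintro ⟨a⟩ ⟨b⟩ hab
  exact Quot.sound (caloronDomRel_of_zRel (zRel_equivalence.eqvGen_iff.mp (Quot.eqvGen_exact hab)))

theorem caloronPsiQuot_surjective [ConnectedSpace G] :
    Function.Surjective (caloronPsiQuot I G) := by
  rintro ⟨g, h, t⟩
  obtain ⟨p, hp, hpg⟩ := exists_memPathFib_apply_two_pi (I := I) g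
  exact ⟨Quot.mk _ ⟨(p, (p t)⁻¹ * h, t), hp⟩, by simp [caloronPsiQuot, caloronPsi, hpg]⟩

end Caloron

/-- Example 3.9 of the paper, at the set level: (i) `(p, g, t)·(γ, n) =
(p·γ, γ(t)⁻¹g, t + 2πn)` defines a right action of `ΩG × ℤ` on `PG × G × ℝ`;
(ii) `Ψ(p, g, t) = [p(2π), p(t)g, t]` is invariant under this action;
(iii) the induced map `(PG × G × ℝ)/(ΩG × ℤ) → (G × G × ℝ)/ℤ` is a bijection,
equivariant for the right `G`-actions `[p, g, t]·k = [p, gk, t]` and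
`[g, h, t]·k = [g, hk, t]`. -/
theorem caloron_transform_pathFibration_iso
    {E : Type*} [NormedAddCommGroup E] [NormedSpace ℝ E]
    {H : Type*} [TopologicalSpace H] (I : ModelWithCorners ℝ E H)
    {G : Type*} [TopologicalSpace G] [ChartedSpace H G] [Group G] [LieGroup I (⊤ : ℕ∞) G]
    [ConnectedSpace G] :
    -- (i) a right action of the product group ΩG × ℤ on PG × G × ℝ:
    -- identity, compatibility, and preservation of PG × G × ℝ
    ((∀ x : (ℝ → G) × G × ℝ, caloronAct x (fun _ => (1 : G)) (0 : ℤ) = x) ∧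
      (∀ (x : (ℝ → G) × G × ℝ) (γ₁ γ₂ : ℝ → G), MemLoopGrp I γ₁ → MemLoopGrp I γ₂ →
        ∀ n₁ n₂ : ℤ,
          caloronAct (caloronAct x γ₁ n₁) γ₂ n₂ =
            caloronAct x (fun t => γ₁ t * γ₂ t) (n₁ + n₂)) ∧
      (∀ x : (ℝ → G) × G × ℝ, MemPathFib I x.1 → ∀ γ : ℝ → G, MemLoopGrp I γ →
        ∀ n : ℤ, MemPathFib I (caloronAct x γ n).1)) ∧
    -- (ii) Ψ is invariant under the action (equality in the quotient (G × G × ℝ)/ℤ)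
    (∀ x : (ℝ → G) × G × ℝ, MemPathFib I x.1 → ∀ γ : ℝ → G, MemLoopGrp I γ →
      ∀ n : ℤ,
        Quot.mk zRel (caloronPsi (caloronAct x γ n)) = Quot.mk zRel (caloronPsi x)) ∧
    -- (iii) the induced map on the quotients is a bijection, equivariant for
    -- the right G-actions
    (∃ F : Quot (caloronDomRel I G) → Quot (zRel (G := G)),
      (∀ x : {x : (ℝ → G) × G × ℝ // MemPathFib I x.1},
          F (Quot.mk _ x) = Quot.mk _ (caloronPsi x.val)) ∧
      Function.Bijective F ∧
      (∀ (x : {x : (ℝ → G) × G × ℝ // MemPathFib I x.1}) (k : G),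
          F (Quot.mk _ ⟨(x.val.1, x.val.2.1 * k, x.val.2.2), x.prop⟩) =
            Quot.mk _
              ((caloronPsi x.val).1, (caloronPsi x.val).2.1 * k,
                (caloronPsi x.val).2.2))) := by
  refine ⟨⟨fun x => by simp [caloronAct], fun x γ₁ _ _ h₂ => caloronAct_caloronAct x γ₁ h₂,
      fun x hx γ hγ _ => hx.mul hγ⟩,
    fun x hx γ hγ n => (Quot.sound (zRel_caloronPsi_caloronAct hx hγ n)).symm,
    caloronPsiQuot I G, fun _ => rfl, ⟨caloronPsiQuot_injective, caloronPsiQuot_surjective⟩,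
    fun x k => congrArg (Quot.mk _) (by simp only [caloronPsi, mul_assoc])⟩
end
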